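/- Over {a<b<c}, for any word w whose projection π_{a,c}(w) has print of length at least 7 (i.e., the b-erased word alternates/changes letter at least 6 times), w is M-equivalent to a word containing ac or ca as a factor. -/

import Mathlib

open List

/-- Number of occurrences of `v` as a scattered subsequence of `w`. -/
def scount {α : Type*} [DecidableEq α] (w v : List α) : ℕ := w.sublists.count v

/-- The ternary ordered alphabet {a < b < c}. -/
inductive ABC | a | b | c
deriving DecidableEq

open ABC

/-- M-equivalence over the ordered alphabet {a < b < c}. -/
def MEq3 (w w' : List ABC) : Prop :=
  scount w [a] = scount w' [a] ∧ scount w [b] = scount w' [b] ∧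
  scount w [c] = scount w' [c] ∧ scount w [a, b] = scount w' [a, b] ∧
  scount w [b, c] = scount w' [b, c] ∧ scount w [a, b, c] = scount w' [a, b, c]

/-- Projection onto {a, c}: erase all b's. -/
def projAC (w : List ABC) : List ABC := w.filter (· ≠ b)

abbrev A (k : ℕ) : List ABC := List.replicate k a
abbrev B (k : ℕ) : List ABC := List.replicate k b
abbrev C (k : ℕ) : List ABC := List.replicate k c

/-!
Call a word AC-factorable if it is `M`-equivalent to a word with a factor `ac` or `ca`. This
passes to superwords, since `M`-equivalence is a congruence, to reversals and to the exchange of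
`a` and `c`, since `|ba|`, `|cb|` and `|cba|` are determined by the `M`-counts.

If one of the runs two to six of the print of `w` has length at least two, `w` has a factor
`x N x` with `x ∉ N` and at least two letters other than `b` in `N`. Up to the symmetry `x = c`,
and then only `|a|`, `|b|` and `|ab|` of `N` matter; as the first `a` of `N` contributes `|b|` to
`|ab|` and the last contributes `0`, one of them can be moved next to a `c`. Otherwise runs two to
six are single letters, which gives a factor `x bᵐ¹ y bᵐ² x ⋯ y bᵐ⁶ x`, and the `b`'s of this
window can be redistributed so that one of its gaps becomes empty.
-/

namespace List

variable {α : Type*} [DecidableEq α]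

lemma scount_cons (x : α) (w v : List α) :
    scount (x :: w) v = scount w v + (w.sublists.map (x :: ·)).count v := by
  rw [scount, (sublists_cons_perm_append x w).count_eq, count_append]
  rfl

@[simp] lemma scount_nil_right (w : List α) : scount w [] = 1 := by
  induction w with
  | nil => rfl
  | cons x w ih => simp [scount_cons, ih, count_eq_zero]

@[simp] lemma scount_nil_cons (y : α) (v : List α) : scount [] (y :: v) = 0 := rfl

lemma scount_cons_cons (x : α) (w : List α) (y : α) (v : List α) :
    scount (x :: w) (y :: v) = scount w (y :: v) + if x = y then scount w v else 0 := by
  rw [scount_cons]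
  split_ifs with h
  · subst h
    rw [count_map_of_injective _ _ cons_injective]
    rfl
  · simp [count_eq_zero, h]

lemma scount_eq_zero_iff {w v : List α} : scount w v = 0 ↔ ¬ v <+ w := by
  rw [scount, count_eq_zero, mem_sublists]

@[simp] lemma scount_singleton (w : List α) (x : α) : scount w [x] = w.count x := by
  induction w with
  | nil => rfl
  | cons t w ih =>
    rw [scount_cons_cons, ih, scount_nil_right, count_cons]
    by_cases h : x = t <;> simp [h, Ne.symm]

lemma scount_append_pair (x y : α) (u v : List α) :
    scount (u ++ v) [x, y] = scount u [x, y] + u.count x * v.count y + scount v [x, y] := by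
  induction u with
  | nil => simp
  | cons t u ih =>
    simp only [cons_append, scount_cons_cons, ih, scount_singleton, count_cons, count_append,
      beq_iff_eq]
    split_ifs <;> ring

lemma scount_append_triple (x y z : α) (u v : List α) :
    scount (u ++ v) [x, y, z] = scount u [x, y, z] + scount u [x, y] * v.count z +
      u.count x * scount v [y, z] + scount v [x, y, z] := by
  induction u with
  | nil => simp
  | cons t u ih =>
    simp only [cons_append, scount_cons_cons, ih, scount_append_pair, scount_singleton,
      count_cons, beq_iff_eq]
    split_ifs <;> ring

lemma scount_replicate (x : α) (k : ℕ) (v : List α) :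
    scount (replicate k x) v = if ∀ y ∈ v, y = x then k.choose v.length else 0 := by
  induction k generalizing v with
  | zero => cases v <;> simp
  | succ k ih =>
    cases v with
    | nil => simp
    | cons y v =>
      rw [replicate_succ, scount_cons_cons, ih, ih]
      by_cases hv : ∀ z ∈ y :: v, z = x
      · have hv' : ∀ z ∈ v, z = x := fun z hz => hv z (mem_cons_of_mem y hz)
        rw [if_pos hv, if_pos (hv y mem_cons_self).symm, if_pos hv', if_pos hv, length_cons,
          Nat.choose_succ_succ', add_comm]
      · rw [if_neg hv, if_neg hv, zero_add]
        simp only [forall_mem_cons, not_and_or] at hv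
        rcases hv with hy | hv
        · simp [Ne.symm hy]
        · simp [hv]

lemma scount_reverse (w v : List α) : scount w.reverse v = scount w v.reverse := by
  conv_lhs => rw [scount, sublists_reverse, ← reverse_reverse v,
    count_map_of_injective _ _ reverse_injective]
  exact (sublists_perm_sublists' w).count_eq _ |>.symm

lemma scount_map {β : Type*} [DecidableEq β] {f : α → β} (hf : f.Injective) (w v : List α) :
    scount (w.map f) (v.map f) = scount w v := by
  rw [scount, scount, sublists_map, count_map_of_injective _ _ (map_injective_iff.mpr hf)]

lemma scount_pair_add_scount_pair {x y : α} (hxy : x ≠ y) (w : List α) :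
    scount w [x, y] + scount w [y, x] = w.count x * w.count y := by
  induction w with
  | nil => simp
  | cons t w ih =>
    simp only [scount_cons_cons, scount_singleton, count_cons, beq_iff_eq]
    split_ifs <;> simp_all <;> linarith

lemma scount_triple_reverse_add {x y z : α} (hxy : x ≠ y) (hyz : y ≠ z) (hxz : x ≠ z)
    (w : List α) :
    scount w [z, y, x] + w.count z * scount w [x, y] + w.count x * scount w [y, z] =
      w.count x * w.count y * w.count z + scount w [x, y, z] := by
  induction w with
  | nil => simp
  | cons t w ih =>
    have pxy := scount_pair_add_scount_pair hxy w
    have pyz := scount_pair_add_scount_pair hyz w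
    simp only [scount_cons_cons, scount_singleton, count_cons, beq_iff_eq]
    split_ifs <;> subst_vars <;> simp_all <;> nlinarith

lemma scount_eq_zero_of_notMem {w v : List α} {z : α}
    (hz : z ∈ v) (hw : z ∉ w) : scount w v = 0 :=
  scount_eq_zero_iff.mpr fun h => hw (h.subset hz)

lemma destutter_ne_cons_of_head?_eq {x : α} {l : List α} (h : l.head? = some x) :
    (x :: l).destutter (· ≠ ·) = l.destutter (· ≠ ·) := by
  obtain ⟨t, rfl⟩ : ∃ t, l = x :: t := by
    cases l with
    | nil => simp at h
    | cons y t => exact ⟨t, by simp_all⟩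
  rw [destutter_cons_cons, if_neg (not_not.mpr rfl), destutter_cons']

lemma destutter_ne_cons_of_head?_ne {x : α} {l : List α} (h : l.head? ≠ some x) :
    (x :: l).destutter (· ≠ ·) = x :: l.destutter (· ≠ ·) := by
  cases l with
  | nil => rfl
  | cons y t =>
    rw [destutter_cons_cons, if_pos (fun hxy => h (by simp [hxy])), destutter_cons']

lemma destutter_ne_replicate_succ (x : α) (n : ℕ) :
    (replicate (n + 1) x).destutter (· ≠ ·) = [x] := by
  induction n with
  | zero => rfl
  | succ n ih =>
    rw [replicate_succ, destutter_ne_cons_of_head?_eq (l := replicate (n + 1) x) rfl, ih]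

end List

namespace ABC

def swapAC : ABC → ABC
  | a => c
  | b => b
  | c => a

@[simp] lemma swapAC_a : swapAC a = c := rfl
@[simp] lemma swapAC_b : swapAC b = b := rfl
@[simp] lemma swapAC_c : swapAC c = a := rfl

@[simp] lemma swapAC_swapAC (x : ABC) : swapAC (swapAC x) = x := by
  cases x <;> rfl

@[simp] lemma swapAC_comp_swapAC : swapAC ∘ swapAC = id :=
  funext swapAC_swapAC

lemma swapAC_injective : swapAC.Injective :=
  Function.LeftInverse.injective swapAC_swapAC

lemma eq_swapAC_or_eq_b {x z : ABC} (hx : x ≠ b) (hz : z ≠ x) : z = swapAC x ∨ z = b := by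
  cases x <;> cases z <;> simp_all

end ABC

lemma scount_map_swapAC (w v : List ABC) : scount (w.map swapAC) v = scount w (v.map swapAC) := by
  simpa [Function.comp_def] using scount_map swapAC_injective w (v.map swapAC)

@[simp] lemma projAC_cons_b (w : List ABC) : projAC (b :: w) = projAC w := by
  simp [projAC]

lemma projAC_cons_of_ne {x : ABC} (hx : x ≠ b) (w : List ABC) :
    projAC (x :: w) = x :: projAC w := by
  simp [projAC, hx]

@[simp] lemma projAC_append (u v : List ABC) : projAC (u ++ v) = projAC u ++ projAC v :=
  filter_append ..

@[simp] lemma projAC_B (n : ℕ) : projAC (B n) = [] := by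
  simp [projAC]

lemma length_projAC (w : List ABC) : (projAC w).length = w.count a + w.count c := by
  induction w with
  | nil => rfl
  | cons x w ih => cases x <;> simp [projAC] at ih ⊢ <;> omega

namespace MEq3

lemma refl (w : List ABC) : MEq3 w w := ⟨rfl, rfl, rfl, rfl, rfl, rfl⟩

lemma append {f f' : List ABC} (h : MEq3 f f') (u v : List ABC) :
    MEq3 (u ++ f ++ v) (u ++ f' ++ v) := by
  obtain ⟨h1, h2, h3, h4, h5, h6⟩ := h
  simp only [scount_singleton] at h1 h2 h3
  refine ⟨?_, ?_, ?_, ?_, ?_, ?_⟩ <;>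
    simp only [append_assoc, scount_singleton, count_append, scount_append_pair,
      scount_append_triple, h1, h2, h3, h4, h5, h6]

variable {u v : List ABC}

lemma scount_ba (h : MEq3 u v) : scount u [b, a] = scount v [b, a] := by
  have hu := scount_pair_add_scount_pair (x := a) (y := b) (by decide) u
  have hv := scount_pair_add_scount_pair (x := a) (y := b) (by decide) v
  obtain ⟨h1, h2, -, h4, -, -⟩ := h
  simp only [scount_singleton] at h1 h2
  rw [h1, h2, h4] at hu
  omega

lemma scount_cb (h : MEq3 u v) : scount u [c, b] = scount v [c, b] := by
  have hu := scount_pair_add_scount_pair (x := b) (y := c) (by decide) u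
  have hv := scount_pair_add_scount_pair (x := b) (y := c) (by decide) v
  obtain ⟨-, h2, h3, -, h5, -⟩ := h
  simp only [scount_singleton] at h2 h3
  rw [h2, h3, h5] at hu
  omega

lemma scount_cba (h : MEq3 u v) : scount u [c, b, a] = scount v [c, b, a] := by
  have hu := scount_triple_reverse_add (x := a) (y := b) (z := c) (by decide) (by decide)
    (by decide) u
  have hv := scount_triple_reverse_add (x := a) (y := b) (z := c) (by decide) (by decide)
    (by decide) v
  obtain ⟨h1, h2, h3, h4, h5, h6⟩ := h
  simp only [scount_singleton] at h1 h2 h3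
  rw [h1, h2, h3, h4, h5, h6] at hu
  omega

lemma reverse (h : MEq3 u v) : MEq3 u.reverse v.reverse := by
  simp only [MEq3, scount_reverse, reverse_cons, reverse_nil, nil_append, cons_append]
  exact ⟨h.1, h.2.1, h.2.2.1, h.scount_ba, h.scount_cb, h.scount_cba⟩

lemma map_swapAC (h : MEq3 u v) : MEq3 (u.map swapAC) (v.map swapAC) := by
  simp only [MEq3, scount_map_swapAC, map_cons, map_nil, swapAC_a, swapAC_b, swapAC_c]
  exact ⟨h.2.2.1, h.2.1, h.1, h.scount_cb, h.scount_ba, h.scount_cba⟩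

end MEq3

def ACFactorable (w : List ABC) : Prop :=
  ∃ w', MEq3 w w' ∧ ([a, c] <:+: w' ∨ [c, a] <:+: w')

namespace ACFactorable

variable {w : List ABC}

lemma of_infix (h : [a, c] <:+: w ∨ [c, a] <:+: w) : ACFactorable w :=
  ⟨w, MEq3.refl w, h⟩

lemma append {f : List ABC} (h : ACFactorable f) (u v : List ABC) :
    ACFactorable (u ++ f ++ v) := by
  obtain ⟨f', hf, hinf⟩ := h
  have hsub : f' <:+: u ++ f' ++ v := ⟨u, v, rfl⟩
  exact ⟨u ++ f' ++ v, hf.append u v, hinf.imp (·.trans hsub) (·.trans hsub)⟩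

lemma reverse (h : ACFactorable w) : ACFactorable w.reverse := by
  obtain ⟨w', hw, hinf⟩ := h
  refine ⟨w'.reverse, hw.reverse, hinf.symm.imp ?_ ?_⟩ <;>
    exact fun h => by simpa using reverse_infix.mpr h

lemma map_swapAC (h : ACFactorable w) : ACFactorable (w.map swapAC) := by
  obtain ⟨w', hw, hinf⟩ := h
  refine ⟨w'.map swapAC, hw.map_swapAC, hinf.symm.imp ?_ ?_⟩ <;>
    exact fun h => by simpa using h.map swapAC

end ACFactorable

lemma MEq3.of_c_notMem {u v : List ABC} (hu : c ∉ u) (hv : c ∉ v) (ha : u.count a = v.count a)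
    (hb : u.count b = v.count b) (hab : scount u [a, b] = scount v [a, b]) : MEq3 u v := by
  refine ⟨by simpa, by simpa, ?_, hab, ?_, ?_⟩
  · simp [count_eq_zero.mpr hu, count_eq_zero.mpr hv]
  · rw [scount_eq_zero_of_notMem (by simp) hu, scount_eq_zero_of_notMem (by simp) hv]
  · rw [scount_eq_zero_of_notMem (by simp) hu, scount_eq_zero_of_notMem (by simp) hv]

lemma exists_scount_ab_eq {p m s : ℕ} (hs : s ≤ p * m) :
    ∃ N : List ABC, c ∉ N ∧ N.count a = p ∧ N.count b = m ∧ scount N [a, b] = s := by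
  induction p generalizing s with
  | zero =>
    obtain rfl : s = 0 := by simpa using hs
    exact ⟨B m, by simp, by simp [count_replicate], by simp, by simp [scount_replicate]⟩
  | succ p ih =>
    by_cases hsm : m ≤ s
    · obtain ⟨N, hc, ha, hb, hab⟩ := ih (s := s - m) (by rw [Nat.succ_mul] at hs; omega)
      refine ⟨a :: N, by simpa using hc, by simp [ha], by simp [hb], ?_⟩
      rw [scount_cons_cons, if_pos rfl, scount_singleton, hab, hb]
      omega
    · refine ⟨B (m - s) ++ a :: B s ++ A p, by simp, by simp [count_replicate],
        by simp [count_replicate]; omega, ?_⟩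
      simp [count_replicate, scount_append_pair, scount_cons_cons, scount_replicate]

lemma acFactorable_c_flanked_run {N : List ABC} (hN : c ∉ N) (h2 : 2 ≤ N.count a) :
    ACFactorable (c :: (N ++ [c])) := by
  have hab : scount N [a, b] ≤ N.count a * N.count b := by
    have := scount_pair_add_scount_pair (x := a) (y := b) (by decide) N
    omega
  have hsub : (N.count a - 1) * N.count b + N.count b = N.count a * N.count b := by
    rw [← Nat.succ_mul, Nat.succ_eq_add_one, Nat.sub_add_cancel (by omega)]
  have hle : N.count b ≤ (N.count a - 1) * N.count b := Nat.le_mul_of_pos_left _ (by omega)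
  by_cases hmt : N.count b ≤ scount N [a, b]
  · obtain ⟨N', hc, ha, hb, hab'⟩ :=
      exists_scount_ab_eq (p := N.count a - 1) (m := N.count b)
        (s := scount N [a, b] - N.count b) (by omega)
    have hM : MEq3 N (a :: N') := MEq3.of_c_notMem hN (by simpa using hc) (by simp [ha]; omega)
      (by simp [hb]) (by rw [scount_cons_cons, if_pos rfl, scount_singleton, hab', hb]; omega)
    exact ⟨c :: a :: (N' ++ [c]), by simpa using hM.append [c] [c], Or.inr ⟨[], N' ++ [c], rfl⟩⟩
  · obtain ⟨N', hc, ha, hb, hab'⟩ :=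
      exists_scount_ab_eq (p := N.count a - 1) (m := N.count b) (s := scount N [a, b]) (by omega)
    have hM : MEq3 N (N' ++ [a]) := MEq3.of_c_notMem hN (by simpa using hc) (by simp [ha]; omega)
      (by simp [hb]) (by simp [scount_append_pair, scount_cons_cons, hab'])
    exact ⟨c :: (N' ++ [a, c]), by simpa using hM.append [c] [c], Or.inl ⟨c :: N', [], by simp⟩⟩

lemma acFactorable_flanked_run {x : ABC} {N : List ABC} (hx : x ≠ b) (hxN : x ∉ N)
    (hN : 2 ≤ (projAC N).length) : ACFactorable (x :: (N ++ [x])) := by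
  rw [length_projAC] at hN
  cases x with
  | a =>
    have hc : c ∉ N.map swapAC := (mem_map_of_injective swapAC_injective).not.mpr hxN
    have ha : (N.map swapAC).count a = N.count c := count_map_of_injective _ _ swapAC_injective c
    have h2 : 2 ≤ (N.map swapAC).count a := by rw [ha]; rw [count_eq_zero.mpr hxN] at hN; omega
    simpa using (acFactorable_c_flanked_run hc h2).map_swapAC
  | b => exact absurd rfl hx
  | c => exact acFactorable_c_flanked_run hxN (by rw [count_eq_zero.mpr hxN] at hN; omega)

def altWord : ABC → List ℕ → List ABC
  | x, [] => [x]
  | x, m :: ms => x :: (B m ++ altWord (swapAC x) ms)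

lemma altWord_swapAC (x : ABC) (ms : List ℕ) :
    altWord (swapAC x) ms = (altWord x ms).map swapAC := by
  induction ms generalizing x with
  | nil => rfl
  | cons m ms ih => simp [altWord, ih]

/- A `b` in gap `0, …, 7` of `acacaca` contributes
`(0,3,0), (1,3,3), (1,2,2), (2,2,4), (2,1,2), (3,1,3), (3,0,0), (4,0,0)` to `(|ab|, |bc|, |abc|)`.
These sums are preserved by moving two `b`'s from gap 2 to gap 4 together with one from gap 5 to
gap 1, and by moving three `b`'s from gap 2 to gap 4 together with one from gap 6 to gap 0; the
witness empties gap 2 by such moves. -/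
lemma acFactorable_window_of_le {m₁ m₂ m₃ m₄ m₅ m₆ : ℕ} (h : m₂ ≤ m₅) :
    ACFactorable (altWord a [m₁, m₂, m₃, m₄, m₅, m₆]) := by
  rcases eq_or_ne m₁ 0 with rfl | h₁
  · exact .of_infix (.inl ⟨[], B m₂ ++ altWord a [m₃, m₄, m₅, m₆], rfl⟩)
  rcases eq_or_ne m₆ 0 with rfl | h₆
  · exact .of_infix (.inr ⟨a :: B m₁ ++ c :: B m₂ ++ a :: B m₃ ++ c :: B m₄ ++ a :: B m₅, [],
      by simp [altWord]⟩)
  refine ⟨B (m₂ % 2) ++ a :: B (m₁ + m₂ / 2 - m₂ % 2) ++ c :: a :: B m₃ ++ c :: B (m₄ + m₂) ++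
      a :: B (m₅ + m₂ % 2 - m₂ / 2) ++ c :: B (m₆ - m₂ % 2) ++ [a], ?_,
    .inr ⟨B (m₂ % 2) ++ a :: B (m₁ + m₂ / 2 - m₂ % 2), B m₃ ++ c :: B (m₄ + m₂) ++
      a :: B (m₅ + m₂ % 2 - m₂ / 2) ++ c :: B (m₆ - m₂ % 2) ++ [a], by simp⟩⟩
  refine ⟨?_, ?_, ?_, ?_, ?_, ?_⟩ <;>
    simp [altWord, count_replicate, scount_append_pair, scount_append_triple, scount_cons_cons,
      scount_replicate] <;> omega

lemma acFactorable_altWord {x : ABC} (hx : x ≠ b) {ms : List ℕ} (hms : ms.length = 6) :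
    ACFactorable (altWord x ms) := by
  have window (m₁ m₂ m₃ m₄ m₅ m₆ : ℕ) : ACFactorable (altWord a [m₁, m₂, m₃, m₄, m₅, m₆]) := by
    rcases le_total m₂ m₅ with h | h
    · exact acFactorable_window_of_le h
    · simpa [altWord] using (acFactorable_window_of_le (m₁ := m₆) (m₃ := m₄) (m₄ := m₃)
        (m₆ := m₁) h).reverse
  match ms, hms with
  | [m₁, m₂, m₃, m₄, m₅, m₆], _ =>
    cases x with
    | a => exact window ..
    | b => exact absurd rfl hx
    | c => simpa [← altWord_swapAC] using (window m₁ m₂ m₃ m₄ m₅ m₆).map_swapAC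

def printLength (w : List ABC) : ℕ := ((projAC w).destutter (· ≠ ·)).length

@[simp] lemma printLength_cons_b (w : List ABC) : printLength (b :: w) = printLength w := by
  simp [printLength]

@[simp] lemma printLength_B_append (n : ℕ) (w : List ABC) :
    printLength (B n ++ w) = printLength w := by
  simp [printLength]

lemma printLength_cons_of_head?_eq {x : ABC} {w : List ABC} (hx : x ≠ b)
    (h : (projAC w).head? = some x) : printLength (x :: w) = printLength w := by
  rw [printLength, projAC_cons_of_ne hx, destutter_ne_cons_of_head?_eq h, printLength]

lemma printLength_cons_of_head?_ne {x : ABC} {w : List ABC} (hx : x ≠ b)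
    (h : (projAC w).head? ≠ some x) : printLength (x :: w) = printLength w + 1 := by
  rw [printLength, projAC_cons_of_ne hx, destutter_ne_cons_of_head?_ne h, length_cons,
    printLength]

lemma printLength_le_one {y : ABC} {w : List ABC} (h : ∀ z ∈ w, z = y ∨ z = b) :
    printLength w ≤ 1 := by
  have hrep : projAC w = replicate (projAC w).length y :=
    eq_replicate_iff.mpr ⟨rfl, fun z hz => by
      simp only [projAC, mem_filter, decide_eq_true_eq] at hz
      exact (h z hz.1).resolve_right hz.2⟩
  rw [printLength, hrep]
  rcases (projAC w).length with _ | n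
  · simp
  · simp [destutter_ne_replicate_succ]

lemma exists_eq_B_append_cons {w : List ABC} (hw : projAC w ≠ []) :
    ∃ n y w', y ≠ b ∧ w = B n ++ y :: w' := by
  induction w with
  | nil => exact absurd rfl hw
  | cons t w ih =>
    by_cases ht : t = b
    · subst ht
      obtain ⟨n, y, w', hy, rfl⟩ := ih (by simpa using hw)
      exact ⟨n + 1, y, w', hy, rfl⟩
    · exact ⟨0, t, w, ht, rfl⟩

lemma acFactorable_or_eq_altWord_append (k : ℕ) {x : ABC} {w : List ABC} (hx : x ≠ b)
    (hw : (projAC w).head? ≠ some x) (hk : k ≤ printLength w) :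
    ACFactorable (x :: w) ∨ ∃ ms rest, ms.length = k ∧ x :: w = altWord x ms ++ rest := by
  induction k generalizing x w with
  | zero => exact .inr ⟨[], w, rfl, rfl⟩
  | succ k ih =>
    obtain ⟨n, y, w', hy, rfl⟩ := exists_eq_B_append_cons (w := w) fun h => by
      simp [printLength, h] at hk
    have hyx : y ≠ x := fun h => hw (by simp [h, projAC_cons_of_ne hx])
    have hy' : y = swapAC x := (eq_swapAC_or_eq_b hx hyx).resolve_right hy
    rcases k with _ | k
    · exact .inr ⟨[n], w', rfl, by simp [altWord, hy']⟩
    rw [printLength_B_append] at hk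
    by_cases hw' : (projAC w').head? = some y
    · -- `y` repeats, so the next `x` closes a run of at least two `y`'s
      left
      have hxw' : x ∈ w' := by
        by_contra hxw'
        have := printLength_le_one (y := y) (w := y :: w') fun z hz => by
          rcases mem_cons.mp hz with rfl | hz
          · exact .inl rfl
          · exact hy' ▸ eq_swapAC_or_eq_b hx (ne_of_mem_of_not_mem hz hxw')
        omega
      obtain ⟨M, w'', hxM, rfl, -⟩ := exists_erase_eq hxw'
      have hM : projAC M ≠ [] := fun h => by
        simp [h, projAC_cons_of_ne hx, hyx.symm] at hw'
      have hrun := acFactorable_flanked_run (N := B n ++ y :: M) hx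
        (by simp [hxM, hyx.symm, hx])
        (by simpa [projAC_cons_of_ne hy, Nat.one_le_iff_ne_zero] using hM)
      simpa using hrun.append [] w''
    · rw [printLength_cons_of_head?_ne hy hw'] at hk
      rcases ih hy hw' (by omega) with h | ⟨ms, rest, hlen, hms⟩
      · left
        simpa using h.append (x :: B n) []
      · exact .inr ⟨n :: ms, rest, by simp [hlen], by simp [altWord, ← hy', hms]⟩

lemma acFactorable_of_seven_le_printLength {w : List ABC} (hw : 7 ≤ printLength w) :
    ACFactorable w := by
  induction w with
  | nil => simp [printLength, projAC] at hw
  | cons x w ih =>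
    by_cases hx : x = b
    · subst hx
      simpa using (ih (by simpa using hw)).append [b] []
    by_cases hhead : (projAC w).head? = some x
    · rw [printLength_cons_of_head?_eq hx hhead] at hw
      simpa using (ih hw).append [x] []
    rw [printLength_cons_of_head?_ne hx hhead] at hw
    obtain h | ⟨ms, rest, hlen, hms⟩ := acFactorable_or_eq_altWord_append 6 hx hhead (by omega)
    · exact h
    · simpa [hms] using (acFactorable_altWord hx hlen).append [] rest

theorem stmt_11 (w : List ABC)
    (hprint : 7 ≤ ((projAC w).destutter (· ≠ ·)).length) :
    ∃ w' : List ABC, MEq3 w w' ∧ ([a, c] <:+: w' ∨ [c, a] <:+: w') :=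
  acFactorable_of_seven_le_printLength hprint
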